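/- arXiv:math/0302147 — 2 statements merged into one kernel-verified Lean document; each statement's English description precedes it below -/
import Mathlib

section
/- The projective variety C in ℙ⁴ over 𝔽₃ cut out by the three quadrics q₁ = 2x₁x₂ + x₃x₂ + x₃² − x₄², q₂ = x₅x₁ − x₄x₂, q₃ = x₁² + x₁x₂ − x₃² + x₅² has exactly 13 points rational over 𝔽₃. -/
/-!
The three equations are homogeneous, so whether a nonzero vector lies on `C` depends only on
the point of `ℙ⁴` it spans. Each point of `ℙ⁴(𝔽₃)` is spanned by exactly `|𝔽₃ˣ| = 2` nonzero
vectors, so `|C(𝔽₃)|` is half the number of nonzero solutions in `𝔽₃⁵`, which an enumeration of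
the `3⁵` vectors shows to be `26`.
-/

open Projectivization
open scoped LinearAlgebra.Projectivization

namespace Projectivization

variable {K V : Type*} [DivisionRing K] [AddCommGroup V] [Module K V]

theorem rep_mk_iff {P : V → Prop} (hP : ∀ (a : Kˣ) (v : V), P (a • v) ↔ P v) (v : V)
    (hv : v ≠ 0) : P (mk K v hv).rep ↔ P v := by
  obtain ⟨a, ha⟩ := exists_smul_eq_mk_rep K v hv
  rw [← ha, hP]

noncomputable def nonZeroSubtypeEquivProdUnits (P : V → Prop)
    (hP : ∀ (a : Kˣ) (v : V), P (a • v) ↔ P v) :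
    {v : V // v ≠ 0 ∧ P v} ≃ {p : ℙ K V // P p.rep} × Kˣ :=
  (Equiv.subtypeSubtypeEquivSubtypeInter _ P).symm.trans <|
    ((nonZeroEquivProjectivizationProdUnits K V).subtypeEquiv
      fun v => (rep_mk_iff hP v v.2).symm).trans Equiv.prodSubtypeFstEquivSubtypeProd

theorem ncard_setOf_rep_mul_card_units (P : V → Prop)
    (hP : ∀ (a : Kˣ) (v : V), P (a • v) ↔ P v) :
    {p : ℙ K V | P p.rep}.ncard * Nat.card Kˣ = Nat.card {v : V // v ≠ 0 ∧ P v} := by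
  rw [Nat.card_congr (nonZeroSubtypeEquivProdUnits P hP), Nat.card_prod,
    ← Nat.card_coe_set_eq]
  rfl

end Projectivization

section Quadrics

variable {R : Type*} [CommRing R]

def q₁ (x : Fin 5 → R) : R := 2 * x 0 * x 1 + x 2 * x 1 + x 2 ^ 2 - x 3 ^ 2

def q₂ (x : Fin 5 → R) : R := x 4 * x 0 - x 3 * x 1

def q₃ (x : Fin 5 → R) : R := x 0 ^ 2 + x 0 * x 1 - x 2 ^ 2 + x 4 ^ 2

theorem q₁_smul (c : R) (x : Fin 5 → R) : q₁ (c • x) = c ^ 2 * q₁ x := by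
  simp only [q₁, Pi.smul_apply, smul_eq_mul]; ring

theorem q₂_smul (c : R) (x : Fin 5 → R) : q₂ (c • x) = c ^ 2 * q₂ x := by
  simp only [q₂, Pi.smul_apply, smul_eq_mul]; ring

theorem q₃_smul (c : R) (x : Fin 5 → R) : q₃ (c • x) = c ^ 2 * q₃ x := by
  simp only [q₃, Pi.smul_apply, smul_eq_mul]; ring

def IsOnCurve (x : Fin 5 → R) : Prop := q₁ x = 0 ∧ q₂ x = 0 ∧ q₃ x = 0

instance [DecidableEq R] : DecidablePred (IsOnCurve (R := R)) := fun _ =>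
  inferInstanceAs (Decidable (_ ∧ _ ∧ _))

theorem isOnCurve_smul [IsDomain R] {c : R} (hc : c ≠ 0) (x : Fin 5 → R) :
    IsOnCurve (c • x) ↔ IsOnCurve x := by
  have hc2 : c ^ 2 ≠ 0 := pow_ne_zero 2 hc
  simp only [IsOnCurve, q₁_smul, q₂_smul, q₃_smul, mul_eq_zero, hc2, false_or]

end Quadrics

theorem card_nonzero_isOnCurve_zmod_three :
    Nat.card {x : Fin 5 → ZMod 3 // x ≠ 0 ∧ IsOnCurve x} = 26 := by
  rw [Nat.card_eq_fintype_card, Fintype.card_subtype]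
  decide

/-- The intersection of the three quadrics `q₁, q₂, q₃` in `ℙ⁴` over `𝔽₃`
has exactly 13 rational points. -/
theorem curve_has_13_points :
    Set.ncard {p : Projectivization (ZMod 3) (Fin 5 → ZMod 3) |
      2 * p.rep 0 * p.rep 1 + p.rep 2 * p.rep 1 + p.rep 2 ^ 2 - p.rep 3 ^ 2 = 0 ∧
      p.rep 4 * p.rep 0 - p.rep 3 * p.rep 1 = 0 ∧
      p.rep 0 ^ 2 + p.rep 0 * p.rep 1 - p.rep 2 ^ 2 + p.rep 4 ^ 2 = 0} = 13 := by
  change {p : ℙ (ZMod 3) (Fin 5 → ZMod 3) | IsOnCurve p.rep}.ncard = 13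
  have h := ncard_setOf_rep_mul_card_units (K := ZMod 3) (V := Fin 5 → ZMod 3) IsOnCurve
    fun a x => by rw [Units.smul_def, isOnCurve_smul a.ne_zero]
  rw [card_nonzero_isOnCurve_zmod_three, Nat.card_units, Nat.card_zmod] at h
  omega
end

section
/- Over 𝔽₃^24 (equivalently, for the 24th powers of the roots), the roots of P(T) = (T²+2T+3)(T²+3T+3)(T²+3)(T²+2T+3)² satisfy: the roots of T²+3 and T²+3T+3 have 24th power equal to 3¹², while the 24th powers α of the roots of T²+2T+3 satisfy α² + 629918·α + 3²⁴ = 0. Consequently ∏(T − zᵢ²⁴) = (T − 3¹²)⁴(T² + 629918T + 3²⁴)³. -/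
/-!
The polynomial `∏ (X - zᵢⁿ)` over the roots of `p` is multiplicative in `p`, so it suffices to
treat the three quadratic factors. Every root of `X² + 3X + 3` or of `X² + 3` satisfies
`z⁶ = -27`, hence `z²⁴ = 3¹²`. For a root of `X² + 2X + 3`, repeated squaring modulo the
quadratic gives `z²⁴ = 302680 z - 12279`, and Vieta's formulas for the two roots then produce
`X² + 629918 X + 3²⁴`.
-/

open Polynomial

namespace Polynomial

theorem X_sub_C_mul_X_sub_C {R : Type*} [CommRing R] (z w : R) :
    (X - C z) * (X - C w) = X ^ 2 - C (z + w) * X + C (z * w) := by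
  simp only [map_add, map_mul]
  ring

section rootsPowPoly

variable {R : Type*} [CommRing R] [IsDomain R]

noncomputable def rootsPowPoly (n : ℕ) (p : R[X]) : R[X] :=
  (p.roots.map fun z => X - C (z ^ n)).prod

theorem rootsPowPoly_mul (n : ℕ) {p q : R[X]} (hpq : p * q ≠ 0) :
    rootsPowPoly n (p * q) = rootsPowPoly n p * rootsPowPoly n q := by
  simp only [rootsPowPoly, roots_mul hpq, Multiset.map_add, Multiset.prod_add]

theorem rootsPowPoly_pow (n : ℕ) (p : R[X]) (k : ℕ) :
    rootsPowPoly n (p ^ k) = rootsPowPoly n p ^ k := by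
  simp only [rootsPowPoly, roots_pow, Multiset.map_nsmul, Multiset.prod_nsmul]

theorem rootsPowPoly_X_sub_C_mul_X_sub_C (n : ℕ) (z w : R) :
    rootsPowPoly n ((X - C z) * (X - C w)) = (X - C (z ^ n)) * (X - C (w ^ n)) := by
  simp [rootsPowPoly, roots_mul (mul_ne_zero (X_sub_C_ne_zero z) (X_sub_C_ne_zero w))]

end rootsPowPoly

theorem rootsPowPoly_quadratic {K : Type*} [Field K] [IsAlgClosed K] {n : ℕ} {b c α β : K}
    (h : ∀ z, z ^ 2 + b * z + c = 0 → z ^ n = α * z + β) :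
    rootsPowPoly n (X ^ 2 + C b * X + C c) =
      X ^ 2 - C (2 * β - α * b) * X + C (α ^ 2 * c - α * β * b + β ^ 2) := by
  have hdeg : (X ^ 2 + C b * X + C c).degree = 2 := by compute_degree!
  obtain ⟨z, hz⟩ := IsAlgClosed.exists_root _ (hdeg.trans_ne two_ne_zero)
  replace hz : z ^ 2 + b * z + c = 0 := by simpa using hz
  set w := -b - z
  have hw : w ^ 2 + b * w + c = 0 := by linear_combination hz
  have hfactor : X ^ 2 + C b * X + C c = (X - C z) * (X - C w) := by
    rw [X_sub_C_mul_X_sub_C, show z + w = -b by ring, show z * w = c by linear_combination -hz,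
      map_neg]
    ring
  rw [hfactor, rootsPowPoly_X_sub_C_mul_X_sub_C, h z hz, h w hw, X_sub_C_mul_X_sub_C]
  congr 4
  · ring
  · linear_combination (-α ^ 2) * hz

theorem rootsPowPoly_quadratic_of_pow_eq_const {K : Type*} [Field K] [IsAlgClosed K] {n : ℕ}
    {b c β : K} (h : ∀ z, z ^ 2 + b * z + c = 0 → z ^ n = β) :
    rootsPowPoly n (X ^ 2 + C b * X + C c) = (X - C β) ^ 2 := by
  rw [rootsPowPoly_quadratic (α := 0) fun z hz => by rw [h z hz, zero_mul, zero_add]]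
  simp only [map_sub, map_mul, map_pow, map_add, C_ofNat, C_0]
  ring

end Polynomial

section RootPowers

variable {R : Type*} [CommRing R] {z : R}

-- `z + 1` is a cube root of unity and `z² = -3 (z + 1)`.
theorem pow_six_of_sq_add_three_mul_add_three (hz : z ^ 2 + 3 * z + 3 = 0) : z ^ 6 = -27 := by
  linear_combination (z ^ 4 - 3 * z ^ 3 + 6 * z ^ 2 - 9 * z + 9) * hz

theorem pow_twenty_four_of_sq_add_two_mul_add_three (hz : z ^ 2 + 2 * z + 3 = 0) :
    z ^ 24 = 302680 * z - 12279 := by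
  have h3 : z ^ 3 = z + 6 := by linear_combination (z - 2) * hz
  have h6 : z ^ 6 = 10 * z + 33 := by
    rw [show z ^ 6 = (z ^ 3) ^ 2 by ring, h3]
    linear_combination hz
  have h12 : z ^ 12 = 460 * z + 789 := by
    rw [show z ^ 12 = (z ^ 6) ^ 2 by ring, h6]
    linear_combination 100 * hz
  rw [show z ^ 24 = (z ^ 12) ^ 2 by ring, h12]
  linear_combination 211600 * hz

end RootPowers

/-- For `P = (T²+2T+3)(T²+3T+3)(T²+3)(T²+2T+3)²` with complex roots `z₁, …, z₁₀`
(with multiplicity), `∏ᵢ (T − zᵢ²⁴) = (T − 3¹²)⁴ (T² + 629918 T + 3²⁴)³`. -/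
theorem roots_pow24_product :
    ((((X^2 + 2*X + 3) * (X^2 + 3*X + 3) * (X^2 + 3) * (X^2 + 2*X + 3)^2 : ℂ[X])).roots.map
      (fun z => X - C (z^24))).prod
    = (X - C (3^12 : ℂ))^4 * (X^2 + C (629918 : ℂ) * X + C ((3:ℂ)^24))^3 := by
  have hA : rootsPowPoly 24 (X ^ 2 + 2 * X + 3 : ℂ[X]) = X ^ 2 + C 629918 * X + C (3 ^ 24) := by
    rw [← C_ofNat, ← C_ofNat, rootsPowPoly_quadratic (α := 302680) (β := -12279)
      fun z hz => pow_twenty_four_of_sq_add_two_mul_add_three hz]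
    norm_num
  have hB : rootsPowPoly 24 (X ^ 2 + 3 * X + 3 : ℂ[X]) = (X - C (3 ^ 12)) ^ 2 := by
    rw [← C_ofNat, rootsPowPoly_quadratic_of_pow_eq_const (β := 3 ^ 12) fun z hz => by
      rw [show z ^ 24 = (z ^ 6) ^ 4 by ring, pow_six_of_sq_add_three_mul_add_three hz]
      norm_num]
  have hC : rootsPowPoly 24 (X ^ 2 + 3 : ℂ[X]) = (X - C (3 ^ 12)) ^ 2 := by
    rw [show (X ^ 2 + 3 : ℂ[X]) = X ^ 2 + C 0 * X + C 3 by rw [C_0, zero_mul, add_zero, C_ofNat],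
      rootsPowPoly_quadratic_of_pow_eq_const (β := 3 ^ 12) fun z hz => by
        rw [show z ^ 24 = (z ^ 2) ^ 12 by ring, show z ^ 2 = -3 by linear_combination hz]
        norm_num]
  have hP : ((X^2 + 2*X + 3) * (X^2 + 3*X + 3) * (X^2 + 3) * (X^2 + 2*X + 3)^2 : ℂ[X]) ≠ 0 :=
    Monic.ne_zero (by monicity!)
  change rootsPowPoly 24 _ = _
  rw [rootsPowPoly_mul 24 hP, rootsPowPoly_mul 24 (left_ne_zero_of_mul hP),
    rootsPowPoly_mul 24 (left_ne_zero_of_mul (left_ne_zero_of_mul hP)), rootsPowPoly_pow,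
    hA, hB, hC]
  ring
end
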